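/- Let k ≥ 2 be an integer, ε > 0, and let H : ℂ → ℂ be holomorphic on the disk D(0,ε). For 0 < |z| < ε set F(z) = z^(−k) and G(z) = H(z)/z^k, and let R : {0 < |z| < ε} → ℝ be a differentiable function whose total differential at every point z is the ℝ-linear map w ↦ Re(F(z)·G'(z)·w) on ℂ ≅ ℝ². Define ψ₃(z) = ½(|G(z)|² − |F(z)|²) + Re(G(z)·F(z)) − 2·R(z). Then |z|^(2k)·ψ₃(z) → (|H(0)|² − 1)/2 as z → 0 (z ≠ 0). -/

import Mathlib

open Complex Filter Topology

/-- The third coordinate of an improper affine front with Weierstrass data `(F, G)`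
and real potential `R` (with `dR = Re (F·G' dz)`):
`ψ₃ = ½(|G|² − |F|²) + Re(G·F) − 2R`. -/
noncomputable def psi3 (F G : ℂ → ℂ) (R : ℂ → ℝ) (z : ℂ) : ℝ :=
  (1 / 2 : ℝ) * (‖G z‖ ^ 2 - ‖F z‖ ^ 2)
    + (G z * F z).re - 2 * R z

/-- The ℝ-linear total differential `w ↦ Re (F(z)·G'(z)·w)` of the potential `R`. -/
noncomputable def periodDeriv (F G : ℂ → ℂ) (z : ℂ) : ℂ →L[ℝ] ℝ :=
  Complex.reCLM.comp
    (((ContinuousLinearMap.mul ℂ ℂ) (F z * deriv G z)).restrictScalars ℝ)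

/-- Auxiliary: the CLM `w ↦ Re (c·w)`. -/
noncomputable def reMulCLM (c : ℂ) : ℂ →L[ℝ] ℝ :=
  Complex.reCLM.comp (((ContinuousLinearMap.mul ℂ ℂ) c).restrictScalars ℝ)

lemma reMulCLM_apply (c w : ℂ) : reMulCLM c w = (c * w).re := rfl

lemma reMulCLM_sub_half (a b : ℂ) :
    reMulCLM a - (2⁻¹ : ℝ) • reMulCLM b = reMulCLM (a - (2⁻¹ : ℂ) * b) := by
  ext w
  simp [reMulCLM, Complex.sub_re, Complex.mul_re, Complex.sub_im]
  ring

lemma hasFDerivAt_re_of_hasDerivAt {f : ℂ → ℂ} {c z : ℂ} (hf : HasDerivAt f c z) :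
    HasFDerivAt (fun w => (f w).re) (reMulCLM c) z := by
  have h1 : HasFDerivAt f (((ContinuousLinearMap.mul ℂ ℂ) c).restrictScalars ℝ) z := by
    have := (hf.hasFDerivAt).restrictScalars ℝ
    refine this.congr_fderiv ?_
    ext w
    simp [mul_comm]
  exact Complex.reCLM.hasFDerivAt.comp z h1

set_option maxHeartbeats 1600000 in
theorem nonembedded_end_third_coord_asymptotics
    (k : ℕ) (hk : 2 ≤ k) (ε : ℝ) (hε : 0 < ε) (H : ℂ → ℂ)
    (hH : DifferentiableOn ℂ H (Metric.ball (0 : ℂ) ε))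
    (R : ℂ → ℝ)
    (hR : ∀ z : ℂ, 0 < ‖z‖ → ‖z‖ < ε →
      HasFDerivAt R
        (periodDeriv (fun w => (w ^ k)⁻¹) (fun w => H w / w ^ k) z) z) :
    Tendsto (fun z : ℂ => ‖z‖ ^ (2 * k) *
        psi3 (fun w => (w ^ k)⁻¹) (fun w => H w / w ^ k) R z)
      (𝓝[≠] (0 : ℂ)) (𝓝 ((‖H 0‖ ^ 2 - 1) / 2)) := by
  set F : ℂ → ℂ := fun w => (w ^ k)⁻¹ with hFdef
  set G : ℂ → ℂ := fun w => H w / w ^ k with hGdef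
  set S : ℂ → ℝ := fun z => R z - 2⁻¹ * (H z / z ^ (2 * k)).re with hSdef
  set r0 : ℝ := ε / 2 with hr0def
  have hr0 : 0 < r0 := by positivity
  have hr0ε : r0 < ε := by rw [hr0def]; linarith
  -- continuity of deriv H on the ball
  have hH' : ContinuousOn (deriv H) (Metric.ball (0 : ℂ) ε) :=
    ((hH.analyticOnNhd Metric.isOpen_ball).deriv).continuousOn
  have hmem : ∀ z : ℂ, ‖z‖ < ε → z ∈ Metric.ball (0 : ℂ) ε := by
    intro z hz; simp [Metric.mem_ball, Complex.dist_eq, hz]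
  have hHat : ∀ z : ℂ, ‖z‖ < ε → HasDerivAt H (deriv H z) z := fun z hz =>
    (hH.differentiableAt (Metric.isOpen_ball.mem_nhds (hmem z hz))).hasDerivAt
  -- the derivative of S
  have hS : ∀ z : ℂ, z ≠ 0 → ‖z‖ < ε →
      HasFDerivAt S (reMulCLM (deriv H z / (2 * z ^ (2 * k)))) z := by
    intro z hz0 hzε
    have hH1 := hHat z hzε
    have hq : HasDerivAt (fun w => H w / w ^ (2 * k))
        (deriv H z / z ^ (2 * k) - 2 * k * H z / z ^ (2 * k + 1)) z := by
      have h := hH1.div (hasDerivAt_pow (2 * k) z) (pow_ne_zero _ hz0)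
      refine h.congr_deriv ?_
      obtain ⟨n, hn⟩ : ∃ n, 2 * k = n + 1 := ⟨2 * k - 1, by omega⟩
      simp only [Nat.cast_mul, Nat.cast_ofNat]
      rw [hn]
      simp only [Nat.add_sub_cancel]
      field_simp
      ring
    have hdG : HasDerivAt G (deriv H z / z ^ k - k * H z / z ^ (k + 1)) z := by
      have h := hH1.div (hasDerivAt_pow k z) (pow_ne_zero _ hz0)
      refine h.congr_deriv ?_
      obtain ⟨n, rfl⟩ : ∃ n, k = n + 1 := ⟨k - 1, by omega⟩
      simp only [Nat.add_sub_cancel]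
      field_simp
      ring
    have hdGval : deriv G z = deriv H z / z ^ k - k * H z / z ^ (k + 1) := hdG.deriv
    have hre := hasFDerivAt_re_of_hasDerivAt hq
    have hcomb : HasFDerivAt S
        (periodDeriv F G z - (2⁻¹ : ℝ) •
          reMulCLM (deriv H z / z ^ (2 * k) - 2 * k * H z / z ^ (2 * k + 1))) z := by
      exact (hR z (norm_pos_iff.mpr hz0) hzε).sub
        (hre.const_mul (2⁻¹ : ℝ))
    have hper : periodDeriv F G z = reMulCLM (F z * deriv G z) := rfl
    have key : F z * deriv G z
        - (2⁻¹ : ℂ) * (deriv H z / z ^ (2 * k) - 2 * k * H z / z ^ (2 * k + 1))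
        = deriv H z / (2 * z ^ (2 * k)) := by
      rw [hdGval]
      show (z ^ k)⁻¹ * (deriv H z / z ^ k - k * H z / z ^ (k + 1)) - _ = _
      field_simp
      ring_nf
    rw [hper, reMulCLM_sub_half, key] at hcomb
    exact hcomb
  -- bound on deriv H on the closed ball of radius r0
  have hball : Metric.closedBall (0 : ℂ) r0 ⊆ Metric.ball (0 : ℂ) ε := by
    apply Metric.closedBall_subset_ball hr0ε
  obtain ⟨M, hM⟩ := (isCompact_closedBall (0 : ℂ) r0).exists_bound_of_continuousOn
    (hH'.mono hball)
  have hM0 : 0 ≤ M := le_trans (norm_nonneg _) (hM 0 (by simp [hr0.le]))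
  -- bound on S on the sphere of radius r0
  have hcontS : ContinuousOn S (Metric.sphere (0 : ℂ) r0) := by
    intro z hz
    have hz0 : z ≠ 0 := by
      intro h
      rw [h] at hz
      simp only [Metric.mem_sphere, dist_self] at hz
      exact hr0.ne' hz.symm
    have hzε : ‖z‖ < ε := by
      have : ‖z‖ = r0 := by simpa [Complex.dist_eq] using hz
      rw [this]; exact hr0ε
    exact ((hS z hz0 hzε).continuousAt).continuousWithinAt
  obtain ⟨C, hC⟩ := (isCompact_sphere (0 : ℂ) r0).exists_bound_of_continuousOn hcontS
  -- the key estimate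
  have hEst : ∀ z : ℂ, z ≠ 0 → ‖z‖ < r0 →
      |S z| ≤ C + M / ((2 * k - 1) * ‖z‖ ^ (2 * k - 1)) := by
    intro z hz0 hzr
    set s : ℝ := ‖z‖ with hsdef
    have hs : 0 < s := norm_pos_iff.mpr hz0
    have hsC : (s : ℂ) ≠ 0 := by exact_mod_cast hs.ne'
    set u : ℂ := z / (s : ℂ) with hudef
    have hu : ‖u‖ = 1 := by
      rw [hudef, norm_div, Complex.norm_real, Real.norm_of_nonneg hs.le, div_self hs.ne']
    have hu0 : u ≠ 0 := by
      intro h; rw [h] at hu; simp at hu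
    have habs_smul : ∀ t : ℝ, 0 ≤ t → ‖t • u‖ = t := by
      intro t ht
      rw [norm_smul, Real.norm_eq_abs, _root_.abs_of_nonneg ht, hu, mul_one]
    have hsu : (s : ℝ) • u = z := by
      rw [hudef, Complex.real_smul]
      field_simp
    set g : ℝ → ℝ := fun t => S (t • u) with hgdef
    set g' : ℝ → ℝ := fun t =>
      ((deriv H (t • u) / (2 * (t • u) ^ (2 * k))) * u).re with hg'def
    have hmono : s ≤ r0 := hzr.le
    have huIcc : Set.uIcc s r0 = Set.Icc s r0 := Set.uIcc_of_le hmono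
    have htpos : ∀ t ∈ Set.Icc s r0, 0 < t := fun t ht => lt_of_lt_of_le hs ht.1
    have htu0 : ∀ t ∈ Set.Icc s r0, t • u ≠ 0 := fun t ht =>
      smul_ne_zero (htpos t ht).ne' hu0
    have hderiv : ∀ t ∈ Set.uIcc s r0, HasDerivAt g (g' t) t := by
      intro t ht
      rw [huIcc] at ht
      have ht0 : 0 < t := htpos t ht
      have htu : ‖t • u‖ = t := habs_smul t ht0.le
      have htuε : ‖t • u‖ < ε := by
        rw [htu]; exact lt_of_le_of_lt ht.2 hr0ε
      have hcd := (hS (t • u) (htu0 t ht) htuε).comp_hasDerivAt t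
        ((hasDerivAt_id t).smul_const u)
      refine hcd.congr_deriv ?_
      simp [reMulCLM_apply, hg'def]
    have hcontg' : ContinuousOn g' (Set.uIcc s r0) := by
      rw [huIcc]
      have hmap : Set.MapsTo (fun t : ℝ => t • u) (Set.Icc s r0)
          (Metric.ball (0 : ℂ) ε) := by
        intro t ht
        apply hmem
        rw [habs_smul t (htpos t ht).le]
        exact lt_of_le_of_lt ht.2 hr0ε
      have hcont_tu : Continuous (fun t : ℝ => t • u) :=
        continuous_id.smul continuous_const
      apply Complex.continuous_re.comp_continuousOn
      apply ContinuousOn.mul _ continuousOn_const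
      apply ContinuousOn.div
      · exact hH'.comp hcont_tu.continuousOn hmap
      · exact (continuous_const.mul (hcont_tu.pow (2 * k))).continuousOn
      · intro t ht
        exact mul_ne_zero two_ne_zero (pow_ne_zero _ (htu0 t ht))
    have hint : IntervalIntegrable g' MeasureTheory.volume s r0 :=
      hcontg'.intervalIntegrable
    have hftc : ∫ t in s..r0, g' t = g r0 - g s :=
      intervalIntegral.integral_eq_sub_of_hasDerivAt hderiv hint
    have hbound : ∀ t ∈ Set.Icc s r0, |g' t| ≤ M * t ^ (-(2 * k : ℤ)) := by
      intro t ht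
      have ht0 := htpos t ht
      have htu := habs_smul t ht0.le
      have h1 : |g' t| ≤ ‖(deriv H (t • u) / (2 * (t • u) ^ (2 * k))) * u‖ :=
        Complex.abs_re_le_norm _
      apply h1.trans
      rw [norm_mul, hu, mul_one, norm_div, norm_mul, norm_pow, htu, Complex.norm_two]
      have hHb : ‖deriv H (t • u)‖ ≤ M := by
        have hmem2 : t • u ∈ Metric.closedBall (0 : ℂ) r0 := by
          simp only [Metric.mem_closedBall, Complex.dist_eq, sub_zero]
          rw [htu]; exact ht.2
        simpa using hM _ hmem2
      have hx : (0 : ℝ) < t ^ (2 * k) := pow_pos ht0 _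
      have h2 : ‖deriv H (t • u)‖ / (2 * t ^ (2 * k)) ≤ M / t ^ (2 * k) :=
        div_le_div₀ hM0 hHb hx (by linarith)
      apply h2.trans_eq
      rw [div_eq_mul_inv, zpow_neg]
      norm_cast
    have hint2 : IntervalIntegrable (fun t : ℝ => M * t ^ (-(2 * k : ℤ)))
        MeasureTheory.volume s r0 := by
      apply ContinuousOn.intervalIntegrable
      apply ContinuousOn.mul continuousOn_const
      apply ContinuousOn.zpow₀ continuousOn_id
      intro t ht
      rw [huIcc] at ht
      exact Or.inl (htpos t ht).ne'
    have hintle : |∫ t in s..r0, g' t| ≤ ∫ t in s..r0, M * t ^ (-(2 * k : ℤ)) := by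
      apply (intervalIntegral.abs_integral_le_integral_abs hmono).trans
      apply intervalIntegral.integral_mono_on hmono hint.abs hint2
      intro t ht
      exact hbound t ht
    have hk1 : ((1 : ℤ) - 2 * k) ≠ 0 := by omega
    have hzpow_eq : ∀ x : ℝ, 0 < x → x ^ ((1 : ℤ) - 2 * k) = (x ^ (2 * k - 1 : ℕ))⁻¹ := by
      intro x hx
      rw [← zpow_natCast x (2 * k - 1), ← zpow_neg]
      congr 1
      push_cast [Nat.cast_sub (by omega : 1 ≤ 2 * k)]
      ring
    have hival : ∫ t in s..r0, M * t ^ (-(2 * k : ℤ))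
        = M * ((r0 ^ ((1 : ℤ) - 2 * k) - s ^ ((1 : ℤ) - 2 * k)) / ((1 : ℝ) - 2 * k)) := by
      rw [intervalIntegral.integral_const_mul]
      congr 1
      have h0 : (0 : ℝ) ∉ Set.uIcc s r0 := by
        rw [huIcc]
        intro h
        exact absurd h.1 (not_le.mpr hs)
      rw [integral_zpow (n := -(2*(k:ℤ))) (Or.inr ⟨by omega, h0⟩)]
      norm_num
      ring_nf
    have h2k1 : (0 : ℝ) < 2 * (k : ℝ) - 1 := by
      have : (2 : ℝ) ≤ (k : ℝ) := by exact_mod_cast hk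
      linarith
    have hintval : ∫ t in s..r0, M * t ^ (-(2 * k : ℤ))
        ≤ M / ((2 * (k : ℝ) - 1) * s ^ (2 * k - 1 : ℕ)) := by
      rw [hival]
      have hr0p : 0 < r0 ^ ((1 : ℤ) - 2 * k) := zpow_pos hr0 _
      have hsp : s ^ ((1 : ℤ) - 2 * k) = (s ^ (2 * k - 1 : ℕ))⁻¹ := hzpow_eq s hs
      have hspos : (0 : ℝ) < s ^ (2 * k - 1 : ℕ) := pow_pos hs _
      rw [hsp]
      have hnum : (r0 ^ ((1 : ℤ) - 2 * k) - (s ^ (2 * k - 1 : ℕ))⁻¹) / ((1 : ℝ) - 2 * k)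
          ≤ (s ^ (2 * k - 1 : ℕ))⁻¹ / (2 * (k : ℝ) - 1) := by
        have heq : (r0 ^ ((1 : ℤ) - 2 * k) - (s ^ (2 * k - 1 : ℕ))⁻¹) / ((1 : ℝ) - 2 * k)
            = ((s ^ (2 * k - 1 : ℕ))⁻¹ - r0 ^ ((1 : ℤ) - 2 * k)) / (2 * (k : ℝ) - 1) := by
          rw [div_eq_div_iff (by linarith) (by linarith)]
          ring
        rw [heq]
        gcongr
        exact sub_le_self _ (le_of_lt hr0p)
      calc M * ((r0 ^ ((1 : ℤ) - 2 * k) - (s ^ (2 * k - 1 : ℕ))⁻¹) / ((1 : ℝ) - 2 * k))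
          ≤ M * ((s ^ (2 * k - 1 : ℕ))⁻¹ / (2 * (k : ℝ) - 1)) :=
            mul_le_mul_of_nonneg_left hnum hM0
        _ = M / ((2 * (k : ℝ) - 1) * s ^ (2 * k - 1 : ℕ)) := by
            rw [eq_div_iff (ne_of_gt (mul_pos h2k1 hspos))]
            field_simp
    have hgs : g s = S z := by
      show S (s • u) = S z
      rw [hsu]
    have hgr0 : |g r0| ≤ C := by
      have hmem3 : r0 • u ∈ Metric.sphere (0 : ℂ) r0 := by
        simp only [Metric.mem_sphere, Complex.dist_eq, sub_zero]
        exact habs_smul r0 hr0.le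
      have := hC _ hmem3; rw [Real.norm_eq_abs] at this; exact this
    have htri : |S z| ≤ |g r0| + |g r0 - g s| := by
      calc |S z| = |g r0 - (g r0 - g s)| := by rw [hgs]; ring_nf
        _ ≤ |g r0| + |g r0 - g s| := abs_sub _ _
    apply htri.trans
    have h4 : |g r0 - g s| ≤ M / ((2 * (k : ℝ) - 1) * s ^ (2 * k - 1 : ℕ)) := by
      rw [← hftc]
      exact hintle.trans hintval
    linarith
  -- eventual equality with the nice expression
  have hEq : ∀ᶠ z in 𝓝[≠] (0 : ℂ),
      ‖z‖ ^ (2 * k) * psi3 F G R z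
        = (‖H z‖ ^ 2 - 1) / 2
          - 2 * (‖z‖ ^ (2 * k) * S z) := by
    filter_upwards [self_mem_nhdsWithin] with z hz
    have hz0 : z ≠ 0 := hz
    have hzk : (‖z‖) ^ k ≠ 0 := pow_ne_zero _ (norm_ne_zero_iff.mpr hz0)
    have hGF : G z * F z = H z / z ^ (2 * k) := by
      show H z / z ^ k * (z ^ k)⁻¹ = _
      rw [division_def, mul_assoc, ← mul_inv, ← pow_add, ← two_mul, ← division_def]
    have hAbsG : ‖G z‖ = ‖H z‖ / ‖z‖ ^ k := by
      show ‖H z / z ^ k‖ = _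
      rw [norm_div, norm_pow]
    have hAbsF : ‖F z‖ = (‖z‖ ^ k)⁻¹ := by
      show ‖(z ^ k)⁻¹‖ = _
      rw [norm_inv, norm_pow]
    simp only [psi3, hSdef, hGF, hAbsG, hAbsF]
    have h2k : ‖z‖ ^ (2 * k) = (‖z‖ ^ k) ^ 2 := by
      rw [← pow_mul, mul_comm]
    rw [h2k]
    field_simp
    ring
  rw [show ((‖H 0‖ ^ 2 - 1) / 2 : ℝ)
      = (‖H 0‖ ^ 2 - 1) / 2 - 2 * 0 by ring]
  apply Tendsto.congr' (hEq.mono fun z h => h.symm)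
  apply Tendsto.sub
  · have hcont : ContinuousAt H 0 :=
      (hH.differentiableAt (Metric.isOpen_ball.mem_nhds (hmem 0 (by simpa using hε)))).continuousAt
    have : ContinuousAt (fun z : ℂ => (‖H z‖ ^ 2 - 1) / 2) 0 := by
      exact (((continuous_norm.continuousAt.comp hcont).pow 2).sub
        continuousAt_const).div_const 2
    exact this.tendsto.mono_left nhdsWithin_le_nhds
  · apply Tendsto.const_mul
    apply squeeze_zero_norm' (a := fun z : ℂ =>
      C * ‖z‖ ^ (2 * k) + (M / (2 * k - 1)) * ‖z‖)
    · have hr0mem : ∀ᶠ z in 𝓝[≠] (0 : ℂ), ‖z‖ < r0 := by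
        have : Metric.ball (0 : ℂ) r0 ∈ 𝓝 (0 : ℂ) := Metric.ball_mem_nhds _ hr0
        filter_upwards [mem_nhdsWithin_of_mem_nhds this] with z hz
        simpa [Metric.mem_ball, Complex.dist_eq] using hz
      filter_upwards [hr0mem, self_mem_nhdsWithin] with z hzr hz0
      have hs : 0 < ‖z‖ := norm_pos_iff.mpr hz0
      have h1 : |S z| ≤ C + M / ((2 * k - 1) * ‖z‖ ^ (2 * k - 1)) :=
        hEst z hz0 hzr
      have h2k1 : (0:ℝ) < 2 * (k:ℝ) - 1 := by
        have : (2:ℝ) ≤ (k:ℝ) := by exact_mod_cast hk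
        linarith
      have hpow : ‖z‖ ^ (2 * k) =
          ‖z‖ ^ (2 * k - 1) * ‖z‖ := by
        rw [← pow_succ]
        congr 1
        omega
      rw [Real.norm_eq_abs, abs_mul, _root_.abs_pow, _root_.abs_of_nonneg (norm_nonneg z)]
      calc ‖z‖ ^ (2 * k) * |S z|
          ≤ ‖z‖ ^ (2 * k) * (C + M / ((2 * k - 1) * ‖z‖ ^ (2 * k - 1))) := by
            apply mul_le_mul_of_nonneg_left h1 (by positivity)
        _ = C * ‖z‖ ^ (2 * k) + (M / (2 * k - 1)) * ‖z‖ := by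
            rw [hpow]
            have hp : (0:ℝ) < ‖z‖ ^ (2 * k - 1) := by positivity
            field_simp
    · have : ContinuousAt (fun z : ℂ =>
          C * ‖z‖ ^ (2 * k) + (M / (2 * k - 1)) * ‖z‖) 0 := by
        exact ((continuous_const.mul (continuous_norm.pow (2*k))).add
          (continuous_const.mul continuous_norm)).continuousAt
      have h0 : C * ‖(0:ℂ)‖ ^ (2 * k) + (M / (2 * k - 1)) * ‖(0:ℂ)‖ = 0 := by
        simp [zero_pow (by omega : 2 * k ≠ 0)]
      have := this.tendsto.mono_left (nhdsWithin_le_nhds (s := {(0:ℂ)}ᶜ))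
      rwa [h0] at this
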